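/- arXiv:math/0409016 — 2 statements merged into one kernel-verified Lean document; each statement's English description precedes it below -/
import Mathlib

section
/- Let m ≥ 1, let c_- : {1, …, m} → ℤ be any function, and let c : ℤ_{>0} → ℤ be a function such that c(j) = 1 − j for all sufficiently large j. Then the following two conditions are equivalent: (A) for every i ∈ {1, …, m} and every j > 0 such that c_-(i) − c(j) is a positive integer, either there exists l > 0 with c_-(i) = c(l), or there exists k ∈ {1, …, m} with c_-(k) = c(j); (B) for every i ∈ {1, …, m} there exists l > 0 with c_-(i) = c(l). -/
/-- Simplification of Jantzen's irreducibility criterion for `gl(m+∞)`.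
Here `cneg i` encodes `(λ+ρ_c, δ'_{-(i+1)})` for `i : Fin m`, and `c j` encodes
`(λ+ρ_c, δ'_{j+1})` for `j : ℕ` (0-indexed), so the condition `c(j) = 1 − j` for
`j ≫ 0` in 1-indexing becomes `c j = −j` for `j ≫ 0`. -/
theorem jantzen_criterion_simplification (m : ℕ) (hm : 1 ≤ m)
    (cneg : Fin m → ℤ) (c : ℕ → ℤ) (hc : ∃ N, ∀ j : ℕ, N ≤ j → c j = -(j : ℤ)) :
    (∀ i : Fin m, ∀ j : ℕ, 0 < cneg i - c j →
        (∃ l : ℕ, cneg i = c l) ∨ (∃ k : Fin m, cneg k = c j)) ↔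
    (∀ i : Fin m, ∃ l : ℕ, cneg i = c l) := by
  constructor
  · intro hA i
    obtain ⟨N, hN⟩ := hc
    set S : ℕ := Finset.univ.sup (fun k : Fin m => (-cneg k).toNat) with hS
    have hbound : ∀ k : Fin m, -cneg k ≤ (S : ℤ) := by
      intro k
      calc -cneg k ≤ ((-cneg k).toNat : ℤ) := Int.self_le_toNat _
        _ ≤ (S : ℤ) := by
          exact_mod_cast Finset.le_sup (f := fun k : Fin m => (-cneg k).toNat)
            (Finset.mem_univ k)
    set j : ℕ := N + S + 1 with hj
    have hcj : c j = -(j : ℤ) := hN j (by omega)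
    have hpos : 0 < cneg i - c j := by
      have := hbound i
      rw [hcj]
      have : -(S : ℤ) ≤ cneg i := by linarith
      push_cast [hj]
      linarith
    rcases hA i j hpos with h | ⟨k, hk⟩
    · exact h
    · exfalso
      have h1 := hbound k
      rw [hcj] at hk
      have : (j : ℤ) ≤ (S : ℤ) := by omega
      push_cast [hj] at this
      omega
  · intro hB i j _
    exact Or.inl (hB i)
end

section
/- Let N ≥ 2 and let T be the ℚ(q)-vector space with basis {V_f : f ∈ ℤ^N}. For 1 ≤ i ≤ N−1 define a linear operator H_i on T by: H_i(V_f) = V_{f·s_i} if f(i) < f(i+1); H_i(V_f) = q^{-1} V_f if f(i) = f(i+1); and H_i(V_f) = V_{f·s_i} − (q − q^{-1}) V_f if f(i) > f(i+1), where f·s_i is f with entries i and i+1 swapped. Then these operators satisfy the Iwahori–Hecke relations: (H_i − q^{-1})(H_i + q) = 0 for all i; H_i H_{i+1} H_i = H_{i+1} H_i H_{i+1} for all i ≤ N−2; and H_i H_j = H_j H_i whenever |i − j| > 1. -/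
noncomputable section

/-- The field ℚ(q) of rational functions. -/
abbrev Kq : Type := RatFunc ℚ

/-- The indeterminate `q`. -/
def q : Kq := RatFunc.X

/-- The tensor space `𝕋^N`: the ℚ(q)-vector space with basis `{V_f : f ∈ ℤ^N}`. -/
abbrev TensorSpace (N : ℕ) := (Fin N → ℤ) →₀ Kq

/-- The basis vector `V_f`. -/
def V {N : ℕ} (f : Fin N → ℤ) : TensorSpace N := Finsupp.single f 1

/-- `f · s`: precompose `f` with the transposition of positions `i` and `i'`. -/
def swapFn {N : ℕ} (i i' : Fin N) (f : Fin N → ℤ) : Fin N → ℤ := f ∘ (Equiv.swap i i')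

/-- The value of the Hecke operator `H_i` on the basis vector `V_f`, where `i, i'`
are the positions `i, i+1`. -/
def HVal {N : ℕ} (i i' : Fin N) (f : Fin N → ℤ) : TensorSpace N :=
  if f i < f i' then V (swapFn i i' f)
  else if f i = f i' then q⁻¹ • V f
  else V (swapFn i i' f) - (q - q⁻¹) • V f

/-- The Hecke operator determined on basis vectors by `HVal`. -/
def HOp {N : ℕ} (i i' : Fin N) : TensorSpace N →ₗ[Kq] TensorSpace N :=
  Finsupp.lsum Kq fun f => LinearMap.toSpanSingleton Kq _ (HVal i i' f)

/-- The operator `H_i` for `1 ≤ i ≤ N−1` (0-indexed: positions `i` and `i+1`). -/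
def Hi (N : ℕ) (i : ℕ) (hi : i + 1 < N) : TensorSpace N →ₗ[Kq] TensorSpace N :=
  HOp ⟨i, Nat.lt_of_succ_lt hi⟩ ⟨i + 1, hi⟩

/-! ### Auxiliary development over a general field -/

namespace HeckeAux

section General

variable {K : Type} [Field K]

/-- Generic basis vector. -/
def Vg {K : Type} [Field K] {N : ℕ} (f : Fin N → ℤ) : (Fin N → ℤ) →₀ K :=
  Finsupp.single f 1

/-- Generic Hecke value. -/
def HValg {K : Type} [Field K] (Q : K) {N : ℕ} (i i' : Fin N) (f : Fin N → ℤ) :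
    (Fin N → ℤ) →₀ K :=
  if f i < f i' then Vg (swapFn i i' f)
  else if f i = f i' then Q⁻¹ • Vg f
  else Vg (swapFn i i' f) - (Q - Q⁻¹) • Vg f

/-- Generic Hecke operator. -/
def HOpg {K : Type} [Field K] (Q : K) {N : ℕ} (i i' : Fin N) :
    ((Fin N → ℤ) →₀ K) →ₗ[K] ((Fin N → ℤ) →₀ K) :=
  Finsupp.lsum K fun f => LinearMap.toSpanSingleton K _ (HValg Q i i' f)

variable (Q : K)

lemma HOpg_V {N : ℕ} (i i' : Fin N) (f : Fin N → ℤ) :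
    HOpg Q i i' (Vg f) = HValg Q i i' f := by
  simp [HOpg, Vg, Finsupp.lsum_single, LinearMap.toSpanSingleton_apply]

lemma HOpg_V_lt {N : ℕ} (i i' : Fin N) (f : Fin N → ℤ) (h : f i < f i') :
    HOpg Q i i' (Vg f) = Vg (swapFn i i' f) := by
  rw [HOpg_V, HValg, if_pos h]

lemma HOpg_V_eq {N : ℕ} (i i' : Fin N) (f : Fin N → ℤ) (h : f i = f i') :
    HOpg Q i i' (Vg f) = Q⁻¹ • Vg f := by
  rw [HOpg_V, HValg, if_neg (by omega), if_pos h]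

lemma HOpg_V_gt {N : ℕ} (i i' : Fin N) (f : Fin N → ℤ) (h : f i' < f i) :
    HOpg Q i i' (Vg f) = Vg (swapFn i i' f) - (Q - Q⁻¹) • Vg f := by
  rw [HOpg_V, HValg, if_neg (by omega), if_neg (by omega)]

lemma swapFn_left {N : ℕ} (i i' : Fin N) (f : Fin N → ℤ) : swapFn i i' f i = f i' := by
  simp [swapFn]

lemma swapFn_right {N : ℕ} (i i' : Fin N) (f : Fin N → ℤ) : swapFn i i' f i' = f i := by
  simp [swapFn]

lemma swapFn_other {N : ℕ} (i i' j : Fin N) (f : Fin N → ℤ) (h : j ≠ i) (h' : j ≠ i') :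
    swapFn i i' f j = f j := by
  simp [swapFn, Equiv.swap_apply_of_ne_of_ne h h']

lemma swapFn_swapFn {N : ℕ} (i i' : Fin N) (f : Fin N → ℤ) :
    swapFn i i' (swapFn i i' f) = f := by
  funext x; simp [swapFn]

lemma swapFn_self {N : ℕ} (i i' : Fin N) (f : Fin N → ℤ) (h : f i = f i') :
    swapFn i i' f = f := by
  funext x
  simp only [swapFn, Function.comp_apply, Equiv.swap_apply_def]
  split_ifs <;> simp_all

lemma sts {N : ℕ} (a b c : Fin N) (hab : a ≠ b) (hbc : b ≠ c) (hac : a ≠ c)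
    (f : Fin N → ℤ) : swapFn a b (swapFn b c (swapFn a b f)) = swapFn a c f := by
  funext x
  simp only [swapFn, Function.comp_apply]
  congr 1
  simp only [Equiv.swap_apply_def]
  split_ifs <;> simp_all

lemma tst {N : ℕ} (a b c : Fin N) (hab : a ≠ b) (hbc : b ≠ c) (hac : a ≠ c)
    (f : Fin N → ℤ) : swapFn b c (swapFn a b (swapFn b c f)) = swapFn a c f := by
  funext x
  simp only [swapFn, Function.comp_apply]
  congr 1
  simp only [Equiv.swap_apply_def]
  split_ifs <;> simp_all

lemma swapFn_comm {N : ℕ} (a b c d : Fin N) (hca : c ≠ a) (hcb : c ≠ b)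
    (hda : d ≠ a) (hdb : d ≠ b) (f : Fin N → ℤ) :
    swapFn a b (swapFn c d f) = swapFn c d (swapFn a b f) := by
  funext x
  simp only [swapFn, Function.comp_apply]
  congr 1
  simp only [Equiv.swap_apply_def]
  split_ifs <;> simp_all

/-- Extensionality on basis vectors. -/
lemma lhom_ext_Vg {N : ℕ} {φ ψ : ((Fin N → ℤ) →₀ K) →ₗ[K] ((Fin N → ℤ) →₀ K)}
    (h : ∀ f, φ (Vg f) = ψ (Vg f)) : φ = ψ := by
  apply Finsupp.lhom_ext
  intro f b
  have hb : (Finsupp.single f b : (Fin N → ℤ) →₀ K) = b • Vg f := by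
    simp [Vg, Finsupp.smul_single]
  rw [hb, map_smul, map_smul, h]

variable (hQ : Q ≠ 0)
include hQ

lemma quadg {N : ℕ} (i i' : Fin N) (h : i ≠ i') :
    (HOpg Q i i' - Q⁻¹ • LinearMap.id) ∘ₗ (HOpg Q i i' + Q • LinearMap.id) = 0 := by
  apply lhom_ext_Vg
  intro f
  simp only [LinearMap.comp_apply, LinearMap.sub_apply, LinearMap.add_apply,
    LinearMap.smul_apply, LinearMap.id_apply, LinearMap.zero_apply]
  rcases lt_trichotomy (f i) (f i') with h1 | h1 | h1 <;>
    simp only [map_add, map_smul, map_sub, HOpg_V_lt, HOpg_V_eq, HOpg_V_gt, swapFn_left,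
      swapFn_right, swapFn_swapFn, h1] <;>
    match_scalars <;>
    (field_simp; try ring)

lemma braidg {N : ℕ} (a b c : Fin N) (hab : a ≠ b) (hbc : b ≠ c) (hac : a ≠ c) :
    HOpg Q a b ∘ₗ HOpg Q b c ∘ₗ HOpg Q a b = HOpg Q b c ∘ₗ HOpg Q a b ∘ₗ HOpg Q b c := by
  apply lhom_ext_Vg
  intro f
  simp only [LinearMap.comp_apply]
  rcases lt_trichotomy (f a) (f b) with h1 | h1 | h1 <;>
    rcases lt_trichotomy (f b) (f c) with h2 | h2 | h2 <;>
    rcases lt_trichotomy (f a) (f c) with h3 | h3 | h3 <;>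
    first
      | omega
      | (simp only [map_add, map_sub, map_smul, HOpg_V_lt, HOpg_V_eq, HOpg_V_gt,
          swapFn_left, swapFn_right, swapFn_other, swapFn_swapFn, swapFn_self, sts, tst,
          h1, h2, h3, hab, hbc, hac, hab.symm, hbc.symm, hac.symm, ne_eq,
          not_false_eq_true] <;>
         match_scalars <;> field_simp <;> ring)

lemma commg {N : ℕ} (a b c d : Fin N) (hca : c ≠ a) (hcb : c ≠ b)
    (hda : d ≠ a) (hdb : d ≠ b) :
    HOpg Q a b ∘ₗ HOpg Q c d = HOpg Q c d ∘ₗ HOpg Q a b := by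
  apply lhom_ext_Vg
  intro f
  simp only [LinearMap.comp_apply]
  rcases lt_trichotomy (f a) (f b) with h1 | h1 | h1 <;>
    rcases lt_trichotomy (f c) (f d) with h2 | h2 | h2 <;>
    simp only [map_add, map_sub, map_smul, HOpg_V_lt, HOpg_V_eq, HOpg_V_gt,
      swapFn_left, swapFn_right, swapFn_other, swapFn_self, swapFn_comm a b c d hca hcb hda hdb,
      h1, h2, hca, hcb, hda, hdb, hca.symm, hcb.symm, hda.symm, hdb.symm, ne_eq,
      not_false_eq_true] <;>
    match_scalars <;> field_simp <;> ring

end General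

end HeckeAux

lemma HOp_eq_HOpg {N : ℕ} (i i' : Fin N) : HOp i i' = HeckeAux.HOpg q i i' := rfl

lemma q_ne_zero : q ≠ 0 := RatFunc.X_ne_zero

/-- The operators `H_i` on the tensor space satisfy the Iwahori–Hecke relations. -/
theorem hecke_relations_on_tensor_space (N : ℕ) (hN : 2 ≤ N) :
    (∀ (i : ℕ) (hi : i + 1 < N),
      (Hi N i hi - q⁻¹ • LinearMap.id) ∘ₗ (Hi N i hi + q • LinearMap.id) = 0) ∧
    (∀ (i : ℕ) (hi : i + 1 + 1 < N),
      Hi N i (Nat.lt_of_succ_lt hi) ∘ₗ Hi N (i + 1) hi ∘ₗ Hi N i (Nat.lt_of_succ_lt hi) =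
      Hi N (i + 1) hi ∘ₗ Hi N i (Nat.lt_of_succ_lt hi) ∘ₗ Hi N (i + 1) hi) ∧
    (∀ (i j : ℕ) (hi : i + 1 < N) (hj : j + 1 < N), (i + 1 < j ∨ j + 1 < i) →
      Hi N i hi ∘ₗ Hi N j hj = Hi N j hj ∘ₗ Hi N i hi) := by
  refine ⟨?_, ?_, ?_⟩
  · intro i hi
    rw [Hi, HOp_eq_HOpg]
    exact HeckeAux.quadg q q_ne_zero _ _ (by simp only [ne_eq, Fin.mk.injEq]; omega)
  · intro i hi
    simp only [Hi, HOp_eq_HOpg]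
    exact HeckeAux.braidg q q_ne_zero _ _ _ (by simp only [ne_eq, Fin.mk.injEq]; omega) (by simp only [ne_eq, Fin.mk.injEq]; omega)
      (by simp only [ne_eq, Fin.mk.injEq]; omega)
  · intro i j hi hj hij
    simp only [Hi, HOp_eq_HOpg]
    exact HeckeAux.commg q q_ne_zero _ _ _ _ (by simp only [ne_eq, Fin.mk.injEq]; omega)
      (by simp only [ne_eq, Fin.mk.injEq]; omega) (by simp only [ne_eq, Fin.mk.injEq]; omega) (by simp only [ne_eq, Fin.mk.injEq]; omega)

end
end
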